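/- Let R be a commutative ℚ-algebra and a, b ∈ R with b nilpotent. Let i ≥ 1 and j ≤ -1 be integers, and write i' = i, j' = −j and g = gcd(i', j'). Then exp(res(log(1 − a t^i) · d log(1 − b t^j))) = (1 − a^{j'/g} b^{i'/g})^{g}. -/

import Mathlib

noncomputable section

namespace CC

variable {R : Type*} [CommRing R]

/-- Formal derivative of a Laurent series. -/
def DerivT (f : LaurentSeries R) : LaurentSeries R where
  coeff n := (n + 1) • f.coeff (n + 1)
  isPWO_support' := by
    have hsub : Function.support (fun n : ℤ => (n + 1) • f.coeff (n + 1)) ⊆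
        (fun n : ℤ => n - 1) '' Function.support f.coeff := by
      intro n hn
      have h1 : (n + 1) • f.coeff (n + 1) ≠ 0 := hn
      have h2 : f.coeff (n + 1) ≠ 0 := fun h => h1 (by rw [h, smul_zero])
      exact ⟨n + 1, h2, by ring⟩
    have hmono : Monotone fun n : ℤ => n - 1 := fun a b h => by dsimp only; omega
    exact (Set.IsPWO.image_of_monotoneOn f.isPWO_support' (hmono.monotoneOn _)).mono hsub

@[simp] lemma DerivT_coeff (f : LaurentSeries R) (n : ℤ) :
    (DerivT f).coeff n = (n + 1) • f.coeff (n + 1) := rfl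

/-- The formal logarithm of a power series `f` with constant term `1` over a `ℚ`-algebra:
`log f = −∑_{p≥1} (1−f)^p / p`. -/
def logS [Algebra ℚ R] (f : PowerSeries R) : PowerSeries R :=
  PowerSeries.mk fun n =>
    PowerSeries.coeff n (-(∑ p ∈ Finset.Icc 1 n, ((p : ℚ)⁻¹) • (1 - f) ^ p))

/-! ### Auxiliary development -/

open Polynomial Finset

/-- truncated `g·log(1-X)` as a polynomial over `ℚ` -/
private def tauP (g N : ℕ) : ℚ[X] := ∑ l ∈ Icc 1 (N-1), (-(g:ℚ)/(l:ℚ)) • X ^ l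

/-- truncated `exp (tauP g N)` -/
private def expP (g N : ℕ) : ℚ[X] :=
  ∑ k ∈ range N, ((k.factorial : ℚ)⁻¹) • (tauP g N) ^ k

private def QP (g N : ℕ) : ℚ[X] :=
  ∑ k ∈ range (N-1), ((k.factorial : ℚ)⁻¹) • (tauP g N) ^ k

private lemma coeff_zero_tauP (g N : ℕ) : (tauP g N).coeff 0 = 0 := by
  unfold tauP
  rw [finset_sum_coeff]
  refine Finset.sum_eq_zero fun l hl => ?_
  rw [coeff_smul, coeff_X_pow, if_neg (by simp at hl; omega), smul_zero]

private lemma X_dvd_tauP (g N : ℕ) : (X : ℚ[X]) ∣ tauP g N :=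
  X_dvd_iff.2 (coeff_zero_tauP g N)

private lemma geom_aux (M : ℕ) : (1 - (X:ℚ[X])) * ∑ l ∈ range M, X ^ l = 1 - X ^ M := by
  linear_combination (-1 : ℚ[X]) * geom_sum_mul (X:ℚ[X]) M

private lemma deriv_tauP (g N : ℕ) :
    derivative (tauP g N) = (-(g:ℚ)) • ∑ l ∈ range (N-1), (X:ℚ[X]) ^ l := by
  unfold tauP
  rw [map_sum, Finset.smul_sum]
  refine Finset.sum_bij' (fun l _ => l - 1) (fun l _ => l + 1) ?_ ?_ ?_ ?_ ?_
  · intro l hl; simp only [mem_Icc] at hl; simp only [mem_range]; omega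
  · intro l hl; simp only [mem_range] at hl; simp only [mem_Icc]; omega
  · intro l hl; simp only [mem_Icc] at hl; omega
  · intro l hl; simp only [mem_range] at hl; omega
  · intro l hl
    simp only [mem_Icc] at hl
    rw [derivative_smul, derivative_X_pow, ← smul_eq_C_mul, smul_smul]
    congr 1
    have : (l:ℚ) ≠ 0 := Nat.cast_ne_zero.2 (by omega)
    field_simp

private lemma one_sub_X_mul_deriv_tauP (g N : ℕ) :
    (1 - (X:ℚ[X])) * derivative (tauP g N) = (g:ℚ) • ((X:ℚ[X]) ^ (N-1) - 1) := by
  rw [deriv_tauP, mul_smul_comm, geom_aux, neg_smul, ← smul_neg]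
  congr 1
  ring

private lemma deriv_expP (g N : ℕ) (hN : 1 ≤ N) :
    derivative (expP g N) = derivative (tauP g N) * QP g N := by
  unfold expP QP
  rw [map_sum]
  obtain ⟨M, rfl⟩ : ∃ M, N = M + 1 := ⟨N - 1, by omega⟩
  rw [Finset.sum_range_succ']
  simp only [map_smul, derivative_pow, Nat.add_sub_cancel]
  rw [Finset.mul_sum]
  simp only [Nat.cast_zero, map_zero, zero_mul, smul_zero, add_zero]
  refine Finset.sum_congr rfl fun k hk => ?_
  rw [mul_comm (derivative (tauP g (M+1))) _, ← smul_eq_C_mul, smul_mul_assoc,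
    smul_mul_assoc, smul_smul]
  congr 1
  rw [Nat.factorial_succ]
  push_cast
  have : (Nat.factorial k : ℚ) ≠ 0 := Nat.cast_ne_zero.2 (Nat.factorial_ne_zero k)
  field_simp

private lemma expP_eq_QP_add (g N : ℕ) (hN : 1 ≤ N) :
    expP g N = QP g N + (((N-1).factorial : ℚ)⁻¹) • (tauP g N) ^ (N-1) := by
  unfold expP QP
  obtain ⟨M, rfl⟩ : ∃ M, N = M + 1 := ⟨N - 1, by omega⟩
  rw [Finset.sum_range_succ]
  simp

private lemma coeff_ode (g N : ℕ) (hN : 1 ≤ N) (m : ℕ) (hm : m < N - 1) :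
    ((1 - (X:ℚ[X])) * derivative (expP g N) + (g:ℚ) • expP g N).coeff m = 0 := by
  obtain ⟨u, hu⟩ := X_dvd_tauP g N
  have key : (1 - (X:ℚ[X])) * derivative (expP g N) + (g:ℚ) • expP g N
      = (g:ℚ) • (QP g N * X^(N-1)) +
        ((g:ℚ) * (((N-1).factorial : ℚ)⁻¹)) • (u^(N-1) * X^(N-1)) := by
    rw [deriv_expP g N hN, ← mul_assoc, one_sub_X_mul_deriv_tauP,
      expP_eq_QP_add g N hN, hu]
    simp only [smul_eq_C_mul, mul_pow, map_mul]
    ring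
  rw [key, coeff_add, coeff_smul, coeff_smul, coeff_mul_X_pow',
    coeff_mul_X_pow', if_neg (by omega), if_neg (by omega), smul_zero, smul_zero,
    add_zero]

private lemma ode_T (g : ℕ) :
    (1 - (X:ℚ[X])) * derivative ((1-X:ℚ[X])^g) + (g:ℚ) • ((1-X:ℚ[X])^g) = 0 := by
  cases g with
  | zero => simp
  | succ g' =>
    rw [derivative_pow]
    have h1 : derivative (1 - X : ℚ[X]) = -1 := by
      rw [derivative_sub, derivative_one, derivative_X]; ring
    rw [h1, Nat.add_sub_cancel, smul_eq_C_mul]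
    push_cast
    ring

private lemma coeff_zero_expP (g N : ℕ) (hN : 1 ≤ N) : (expP g N).coeff 0 = 1 := by
  rw [coeff_zero_eq_eval_zero]
  unfold expP
  rw [eval_finset_sum]
  have ht : (tauP g N).eval 0 = 0 := by
    rw [← coeff_zero_eq_eval_zero]; exact coeff_zero_tauP g N
  rw [Finset.sum_eq_single 0]
  · simp
  · intro k hk hk0
    rw [eval_smul, eval_pow, ht, zero_pow hk0, smul_zero]
  · intro h; exact absurd (Finset.mem_range.2 hN) h

private lemma coeff_expP_eq (g N : ℕ) (hN : 1 ≤ N) : ∀ m, m < N →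
    (expP g N).coeff m = ((1 - X : ℚ[X])^g).coeff m := by
  set T : ℚ[X] := (1-X:ℚ[X])^g with hTdef
  set Δ : ℚ[X] := expP g N - T with hD
  suffices h : ∀ m, m < N → Δ.coeff m = 0 by
    intro m hm
    have := h m hm
    rw [hD, coeff_sub, sub_eq_zero] at this
    exact this
  have hode : ∀ m, m < N - 1 →
      ((1 - (X:ℚ[X])) * derivative Δ + (g:ℚ) • Δ).coeff m = 0 := by
    intro m hm
    have h1 := coeff_ode g N hN m hm
    have h2 := ode_T g
    have : (1 - (X:ℚ[X])) * derivative Δ + (g:ℚ) • Δ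
        = ((1 - (X:ℚ[X])) * derivative (expP g N) + (g:ℚ) • expP g N)
          - ((1 - (X:ℚ[X])) * derivative T + (g:ℚ) • T) := by
      rw [hD, derivative_sub, smul_sub]; ring
    rw [this, h2, sub_zero, h1]
  intro m
  induction m with
  | zero =>
    intro _
    rw [hD, coeff_sub, coeff_zero_expP g N hN, hTdef, coeff_zero_eq_eval_zero]
    simp
  | succ m ih =>
    intro hm
    have hm' : m < N := by omega
    have hδm : Δ.coeff m = 0 := ih hm'
    have h := hode m (by omega)
    rw [coeff_add, coeff_smul, hδm, smul_zero, add_zero, sub_mul, one_mul,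
      coeff_sub, coeff_derivative] at h
    have hX : ((X:ℚ[X]) * derivative Δ).coeff m = 0 := by
      cases m with
      | zero => simp
      | succ m' =>
        rw [coeff_X_mul, coeff_derivative, hδm]
        ring
    rw [hX, sub_zero] at h
    have : ((m:ℚ) + 1) ≠ 0 := by positivity
    exact (mul_eq_zero.1 h).resolve_right this

private lemma aeval_congr_of_coeff_eq [Algebra ℚ R] (x : R) (N : ℕ) (hx : x ^ N = 0)
    {p q : ℚ[X]} (h : ∀ m, m < N → p.coeff m = q.coeff m) : aeval x p = aeval x q := by
  set M := max (max (p.natDegree + 1) (q.natDegree + 1)) N with hM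
  rw [aeval_eq_sum_range' (n := M) (by omega) x, aeval_eq_sum_range' (n := M) (by omega) x]
  refine Finset.sum_congr rfl fun m hm => ?_
  by_cases hmN : m < N
  · rw [h m hmN]
  · have : x ^ m = 0 := by
      obtain ⟨c, rfl⟩ : ∃ c, m = N + c := ⟨m - N, by omega⟩
      rw [pow_add, hx, zero_mul]
    rw [this, smul_zero, smul_zero]

/-- `exp (g · log (1 - x)) = (1 - x)^g` for a nilpotent `x`, all series truncated. -/
private lemma explog [Algebra ℚ R] (x : R) (N g : ℕ) (hN : 1 ≤ N) (hx : x ^ N = 0) :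
    ∑ k ∈ range N, ((k.factorial : ℚ)⁻¹) •
      (∑ l ∈ Icc 1 (N-1), (-(g:ℚ)/(l:ℚ)) • x ^ l) ^ k = (1 - x)^g := by
  have h1 : aeval x (expP g N) = ∑ k ∈ range N, ((k.factorial : ℚ)⁻¹) •
      (∑ l ∈ Icc 1 (N-1), (-(g:ℚ)/(l:ℚ)) • x ^ l) ^ k := by
    unfold expP tauP
    rw [map_sum]
    refine Finset.sum_congr rfl fun k _ => ?_
    rw [map_smul, map_pow, map_sum]
    congr 2
    refine Finset.sum_congr rfl fun l _ => ?_
    rw [map_smul, map_pow, aeval_X]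
  have h2 : aeval x ((1 - X : ℚ[X])^g) = (1 - x)^g := by
    rw [map_pow, map_sub, map_one, aeval_X]
  rw [← h1, ← h2]
  exact aeval_congr_of_coeff_eq x N hx (coeff_expP_eq g N hN)

private lemma coeff_sum' {α : Type*} (s : Finset α) (f : α → LaurentSeries R) (n : ℤ) :
    (∑ x ∈ s, f x).coeff n = ∑ x ∈ s, (f x).coeff n := by
  classical
  induction s using Finset.induction with
  | empty => simp
  | insert _ _ h ih => rw [Finset.sum_insert h, Finset.sum_insert h, HahnSeries.coeff_add, ih]

private lemma derivT_Lg [Algebra ℚ R] (b : R) (q : ℕ) (j : ℤ) :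
    DerivT (-(∑ p ∈ Finset.Icc 1 q, ((p : ℚ)⁻¹) • (HahnSeries.single j b : LaurentSeries R) ^ p))
      = ∑ p ∈ Finset.Icc 1 q, HahnSeries.single (j * p - 1) ((-j) • b ^ p) := by
  ext n
  rw [DerivT_coeff, HahnSeries.coeff_neg, coeff_sum', coeff_sum', smul_neg, ← neg_smul,
    Finset.smul_sum]
  refine Finset.sum_congr rfl fun p hp => ?_
  rw [HahnSeries.coeff_smul, HahnSeries.single_pow, HahnSeries.coeff_single,
    HahnSeries.coeff_single]
  have hpj : p • j = j * p := by rw [nsmul_eq_mul]; ring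
  have hp1 : 1 ≤ p := (Finset.mem_Icc.1 hp).1
  rw [hpj] at *
  split_ifs with h1 h2 h2
  · rw [← Int.cast_smul_eq_zsmul ℚ, ← Int.cast_smul_eq_zsmul ℚ, smul_smul]
    congr 1
    have hp0 : (p:ℚ) ≠ 0 := Nat.cast_ne_zero.2 (by omega)
    have : ((-(n+1) : ℤ) : ℚ) = -((j:ℚ) * p) := by
      rw [h1]; push_cast; ring
    rw [this]
    push_cast
    field_simp
  · exfalso; omega
  · exfalso; omega
  · rw [smul_zero, smul_zero]

private lemma coeff_logS [Algebra ℚ R] (a : R) (i : ℕ) (hi : 1 ≤ i) (n : ℕ) (hn : 1 ≤ n) :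
    PowerSeries.coeff n (logS (1 - PowerSeries.C a * PowerSeries.X ^ i)) =
      if i ∣ n then (-(((n/i : ℕ) : ℚ)⁻¹)) • a ^ (n/i) else 0 := by
  unfold logS
  rw [PowerSeries.coeff_mk, map_neg, map_sum]
  have hterm : ∀ p ∈ Icc 1 n,
      PowerSeries.coeff n (((p:ℚ)⁻¹) • (1 - (1 - PowerSeries.C a * PowerSeries.X ^ i)) ^ p)
        = if n = i * p then ((p:ℚ)⁻¹) • a ^ p else 0 := by
    intro p hp
    rw [sub_sub_cancel, PowerSeries.coeff_smul, mul_pow, ← map_pow, ← pow_mul,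
      PowerSeries.coeff_C_mul, PowerSeries.coeff_X_pow]
    split_ifs with h
    · rw [mul_one]
    · rw [mul_zero, smul_zero]
  rw [Finset.sum_congr rfl hterm]
  by_cases hd : i ∣ n
  · obtain ⟨d, rfl⟩ := hd
    have hd1 : 1 ≤ d := by
      rcases Nat.eq_zero_or_pos d with h | h
      · subst h; omega
      · exact h
    have hcond : ∀ p, (i * d = i * p) ↔ (p = d) := by
      intro p; constructor
      · intro h; exact (Nat.eq_of_mul_eq_mul_left (by omega) h).symm
      · rintro rfl; rfl
    simp only [hcond]
    rw [Finset.sum_ite_eq' (Icc 1 (i*d)) d (fun p => ((p:ℚ)⁻¹) • a ^ p)]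
    rw [if_pos (Finset.mem_Icc.2 ⟨hd1, Nat.le_mul_of_pos_left d (by omega)⟩),
      if_pos ⟨d, rfl⟩, Nat.mul_div_cancel_left d (by omega)]
    rw [neg_smul]
  · rw [if_neg hd, Finset.sum_eq_zero, neg_zero]
    intro p hp
    rw [if_neg]
    intro h
    exact hd ⟨p, h⟩

private lemma expsum_ext [Algebra ℚ R] (r : R) {n m : ℕ} (hnm : n ≤ m) (hn : r ^ n = 0) :
    ∑ k ∈ range m, ((Nat.factorial k : ℚ)⁻¹) • r ^ k
      = ∑ k ∈ range n, ((Nat.factorial k : ℚ)⁻¹) • r ^ k := by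
  refine (Finset.sum_subset (Finset.range_subset_range.2 hnm) fun k _ hk => ?_).symm
  have hk' : n ≤ k := by simpa using hk
  have : r ^ k = 0 := by
    obtain ⟨c, rfl⟩ : ∃ c, k = n + c := ⟨k - n, by omega⟩
    rw [pow_add, hn, zero_mul]
  rw [this, smul_zero]


/-- **Integrality formula for the Contou-Carrère symbol on elementary factors.**
Let `R` be a commutative `ℚ`-algebra, `a, b ∈ R` with `b` nilpotent (say `b^q = 0`),
`i ≥ 1` and `j ≤ −1` integers.  Set `f = 1 − a tⁱ`, `log g = −∑_{p=1}^{q} (b t^j)^p / p`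
(a finite sum since `b` is nilpotent), `r = res(log f · d log g)` and
`g₀ = gcd(i, −j)`.  Then `r` is nilpotent and
`exp r = (1 − a^{(−j)/g₀} b^{i/g₀})^{g₀}` (the exponential being the stabilized finite sum
`∑_{k<n} r^k / k!` for any `n` with `rⁿ = 0`). -/
theorem exp_res_log_elementary [Algebra ℚ R]
    (a b : R) (q : ℕ) (hb : b ^ q = 0) (i : ℕ) (hi : 1 ≤ i) (j : ℤ) (hj : j ≤ -1) :
    letI Lf : LaurentSeries R :=
      (HahnSeries.ofPowerSeries ℤ R) (logS (1 - PowerSeries.C a * PowerSeries.X ^ i))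
    letI Lg : LaurentSeries R :=
      -(∑ p ∈ Finset.Icc 1 q, ((p : ℚ)⁻¹) • (HahnSeries.single j b : LaurentSeries R) ^ p)
    letI r : R := (Lf * DerivT Lg).coeff (-1)
    letI jn : ℕ := (-j).toNat
    letI g₀ : ℕ := Nat.gcd i jn
    IsNilpotent r ∧
      ∀ n : ℕ, r ^ n = 0 →
        (∑ k ∈ Finset.range n, ((Nat.factorial k : ℚ)⁻¹) • r ^ k) =
          (1 - a ^ (jn / g₀) * b ^ (i / g₀)) ^ g₀ := by
  set r : R := ((HahnSeries.ofPowerSeries ℤ R) (logS (1 - PowerSeries.C a * PowerSeries.X ^ i)) *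
      DerivT (-∑ p ∈ Icc 1 q, ((p:ℚ)⁻¹) • (HahnSeries.single j b : LaurentSeries R) ^ p)).coeff
      (-1) with hrr_def
  set jn : ℕ := (-j).toNat with hjn_def
  set g₀ : ℕ := Nat.gcd i jn with hg₀_def
  have hjZ : (jn : ℤ) = -j := Int.toNat_of_nonneg (by omega)
  have hjn1 : 1 ≤ jn := by rw [hjn_def]; omega
  have hg₀ : 0 < g₀ := Nat.gcd_pos_of_pos_left jn (by omega)
  set i₁ : ℕ := i / g₀ with hi₁_def
  set j₁ : ℕ := jn / g₀ with hj₁_def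
  have hii : g₀ * i₁ = i := Nat.mul_div_cancel' (Nat.gcd_dvd_left i jn)
  have hjj : g₀ * j₁ = jn := Nat.mul_div_cancel' (Nat.gcd_dvd_right i jn)
  have hi₁ : 1 ≤ i₁ := by
    rcases Nat.eq_zero_or_pos i₁ with h | h
    · rw [h, mul_zero] at hii; omega
    · exact h
  have hj₁ : 1 ≤ j₁ := by
    rcases Nat.eq_zero_or_pos j₁ with h | h
    · rw [h, mul_zero] at hjj; omega
    · exact h
  have cop : Nat.Coprime i₁ j₁ := Nat.coprime_div_gcd_div_gcd hg₀
  have hdvd : ∀ p : ℕ, (i ∣ jn * p ↔ i₁ ∣ p) := by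
    intro p
    rw [← hii, ← hjj, mul_assoc, Nat.mul_dvd_mul_iff_left hg₀]
    exact ⟨fun h => cop.dvd_of_dvd_mul_left h, fun h => h.mul_left _⟩
  set A : R := a ^ j₁ * b ^ i₁ with hA_def
  set K : ℕ := q / i₁ with hK_def
  set N : ℕ := K + 1 with hN_def
  have hbm : ∀ m, q ≤ m → b ^ m = 0 := by
    intro m hm
    obtain ⟨c, rfl⟩ : ∃ c, m = q + c := ⟨m - q, by omega⟩
    rw [pow_add, hb, zero_mul]
  have hqlt : q ≤ i₁ * N := by
    have h1 : q / i₁ < N := by rw [hN_def, hK_def]; exact Nat.lt_succ_self _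
    have h2 : q < N * i₁ := (Nat.div_lt_iff_lt_mul (by omega : 0 < i₁)).1 h1
    rw [mul_comm]
    omega
  have hAN : A ^ N = 0 := by
    rw [hA_def, mul_pow, ← pow_mul, ← pow_mul, hbm (i₁ * N) hqlt, mul_zero]
  -- The key computation of the residue
  have hrr2 : r = ∑ l ∈ Icc 1 K, (-(g₀:ℚ)/(l:ℚ)) • A ^ l := by
    rw [hrr_def]
    rw [derivT_Lg, Finset.mul_sum, coeff_sum']
    have hterm : ∀ p ∈ Icc 1 q,
        ((HahnSeries.ofPowerSeries ℤ R (logS (1 - PowerSeries.C a * PowerSeries.X ^ i))) *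
          HahnSeries.single (j * p - 1) ((-j) • b ^ p)).coeff (-1)
        = if i₁ ∣ p then (-(g₀:ℚ)/((p/i₁ : ℕ):ℚ)) • A ^ (p/i₁) else 0 := by
      intro p hp
      have hp1 : 1 ≤ p := (Finset.mem_Icc.1 hp).1
      have e1 : (-1 : ℤ) = (-(j*p)) + (j*p - 1) := by ring
      rw [e1, HahnSeries.coeff_mul_single_add]
      have e2 : (-(j * (p:ℤ)) : ℤ) = ((jn * p : ℕ) : ℤ) := by push_cast [hjZ]; ring
      rw [e2, HahnSeries.ofPowerSeries_apply_coeff,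
        coeff_logS a i hi (jn * p) (Nat.mul_pos (by omega) (by omega))]
      simp only [hdvd p]
      split_ifs with h
      · obtain ⟨l, rfl⟩ := h
        have hl1 : 1 ≤ l := by
          rcases Nat.eq_zero_or_pos l with h0 | h0
          · rw [h0, mul_zero] at hp1; omega
          · exact h0
        have hq1 : jn * (i₁ * l) / i = j₁ * l := by
          rw [← hii, ← hjj]
          have e : (g₀ * j₁) * (i₁ * l) = (g₀ * i₁) * (j₁ * l) := by ring
          rw [e, Nat.mul_div_cancel_left _ (by positivity)]
        have hq2 : (i₁ * l) / i₁ = l := Nat.mul_div_cancel_left l (by omega)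
        rw [hq1, hq2]
        have e3 : ((-j : ℤ)) • (b ^ (i₁ * l)) = (jn:ℚ) • b ^ (i₁ * l) := by
          rw [← hjZ, ← Int.cast_smul_eq_zsmul ℚ]
          norm_num
        rw [e3, smul_mul_assoc, mul_smul_comm, smul_smul]
        have e4 : a ^ (j₁ * l) * b ^ (i₁ * l) = A ^ l := by
          rw [hA_def, mul_pow, ← pow_mul, ← pow_mul]
        rw [e4]
        congr 1
        have hjnq : (jn : ℚ) = (g₀ : ℚ) * (j₁ : ℚ) := by exact_mod_cast hjj.symm
        have hl0 : (l : ℚ) ≠ 0 := Nat.cast_ne_zero.2 (by omega)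
        have hj₁0 : (j₁ : ℚ) ≠ 0 := Nat.cast_ne_zero.2 (by omega)
        rw [hjnq]
        push_cast
        field_simp
      · rw [zero_mul]
    rw [Finset.sum_congr rfl hterm, ← Finset.sum_filter]
    refine Finset.sum_nbij' (fun p => p / i₁) (fun l => i₁ * l) ?_ ?_ ?_ ?_ ?_
    · intro p hp
      simp only [Finset.mem_filter, Finset.mem_Icc] at hp
      obtain ⟨⟨hp1, hpq⟩, ⟨l, rfl⟩⟩ := hp
      have hl1 : 1 ≤ l := by
        rcases Nat.eq_zero_or_pos l with h0 | h0
        · rw [h0, mul_zero] at hp1; omega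
        · exact h0
      simp only [Finset.mem_Icc]
      rw [Nat.mul_div_cancel_left l (by omega)]
      refine ⟨hl1, ?_⟩
      rw [hK_def, Nat.le_div_iff_mul_le (by omega : 0 < i₁), mul_comm]
      exact hpq
    · intro l hl
      simp only [Finset.mem_Icc] at hl
      simp only [Finset.mem_filter, Finset.mem_Icc]
      refine ⟨⟨Nat.mul_pos (by omega) (by omega), ?_⟩, ⟨l, rfl⟩⟩
      rw [mul_comm, ← Nat.le_div_iff_mul_le (by omega : 0 < i₁)]
      rw [hK_def] at hl
      exact hl.2
    · intro p hp
      simp only [Finset.mem_filter] at hp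
      exact Nat.mul_div_cancel' hp.2
    · intro l hl
      exact Nat.mul_div_cancel_left l (by omega)
    · intro p hp
      rfl
  have hrN : r ^ N = 0 := by
    have hfac : r = A * ∑ l ∈ Icc 1 K, (-(g₀:ℚ)/(l:ℚ)) • A ^ (l-1) := by
      rw [hrr2, Finset.mul_sum]
      refine Finset.sum_congr rfl fun l hl => ?_
      have hl1 : 1 ≤ l := (Finset.mem_Icc.1 hl).1
      rw [mul_smul_comm]
      congr 1
      rw [← pow_succ']
      congr 1
      omega
    rw [hfac, mul_pow, hAN, zero_mul]
  refine ⟨⟨N, hrN⟩, fun n hn => ?_⟩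
  have hstab : ∑ k ∈ Finset.range n, ((Nat.factorial k : ℚ)⁻¹) • r ^ k
      = ∑ k ∈ Finset.range N, ((Nat.factorial k : ℚ)⁻¹) • r ^ k := by
    rcases le_total n N with h | h
    · exact (expsum_ext r h hn).symm
    · exact expsum_ext r h hrN
  rw [hstab, hrr2]
  have hexp := explog A N g₀ (by rw [hN_def]; exact Nat.succ_pos K) hAN
  rw [hN_def] at hexp
  simpa using hexp

end CC
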